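/- arXiv:1611.07066 — 5 statements merged into one kernel-verified Lean document; each statement's English description precedes it below -/
import Mathlib

section
/- Let S^n(1/k) be the sphere of radius 1/k in ℝ^{n+1}, n ≥ 2, and let v ∈ ℝ^{n+1} be a nonzero vector. The vector field X on S^n(1/k) given by the pointwise orthogonal projection of v onto the tangent spaces of S^n(1/k), X(p) = v − k²⟨v,p⟩p, satisfies −div∇X = k² X; that is, X is an eigenvector field of the rough Laplacian with eigenvalue k². -/
open MeasureTheory Metric
open scoped RealInnerProductSpace

noncomputable section

/-- The sphere of radius `1/k` centered at the origin of `ℝ^{n+1}`. -/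
def Sph (n : ℕ) (k : ℝ) : Set (EuclideanSpace ℝ (Fin (n + 1))) :=
  sphere (0 : EuclideanSpace ℝ (Fin (n + 1))) (1 / k)

/-- Orthogonal projection onto the tangent space of `S^n(1/k)` at `p` (for `p` on the
sphere, i.e. `‖p‖ = 1/k`): `u ↦ u − k²⟨u,p⟩p`. -/
def tproj (n : ℕ) (k : ℝ) (p u : EuclideanSpace ℝ (Fin (n + 1))) :
    EuclideanSpace ℝ (Fin (n + 1)) :=
  u - (k ^ 2 * ⟪u, p⟫) • p

/-- Covariant derivative (Levi–Civita connection of `S^n(1/k)`) of the vector field `X`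
at `p` in the (tangential part of the) direction `u`: the tangential projection of the
ambient directional derivative. -/
def covD (n : ℕ) (k : ℝ) (X : EuclideanSpace ℝ (Fin (n + 1)) → EuclideanSpace ℝ (Fin (n + 1)))
    (p u : EuclideanSpace ℝ (Fin (n + 1))) : EuclideanSpace ℝ (Fin (n + 1)) :=
  tproj n k p (fderiv ℝ X p (tproj n k p u))

/-- Pointwise squared norm `‖∇X‖²` of the covariant derivative of `X` at `p` (the
Hilbert–Schmidt norm; summing over the standard orthonormal basis of the ambient space
is the same as summing over an orthonormal basis of the tangent space, since the
normal direction is projected away). -/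
def covNormSq (n : ℕ) (k : ℝ)
    (X : EuclideanSpace ℝ (Fin (n + 1)) → EuclideanSpace ℝ (Fin (n + 1)))
    (p : EuclideanSpace ℝ (Fin (n + 1))) : ℝ :=
  ∑ i : Fin (n + 1), ‖covD n k X p (EuclideanSpace.single i 1)‖ ^ 2

/-- The Riemannian volume measure of `S^n(1/k)`: the `n`-dimensional Hausdorff measure
restricted to the sphere. -/
def smeasure (n : ℕ) (k : ℝ) : Measure (EuclideanSpace ℝ (Fin (n + 1))) :=
  (μH[(n : ℝ)]).restrict (Sph n k)

/-- The energy functional `F(X) = (∫ ‖∇X‖²)/(∫ ‖X‖²)` on vector fields of `S^n(1/k)`. -/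
def energy (n : ℕ) (k : ℝ)
    (X : EuclideanSpace ℝ (Fin (n + 1)) → EuclideanSpace ℝ (Fin (n + 1))) : ℝ :=
  (∫ p, covNormSq n k X p ∂smeasure n k) / (∫ p, ‖X p‖ ^ 2 ∂smeasure n k)

/-- A vector field (given by an ambient extension) is tangent to `S^n(1/k)`. -/
def IsTangent (n : ℕ) (k : ℝ)
    (X : EuclideanSpace ℝ (Fin (n + 1)) → EuclideanSpace ℝ (Fin (n + 1))) : Prop :=
  ∀ p ∈ Sph n k, ⟪X p, p⟫ = 0

/-- `X` is a Killing field of `S^n(1/k)`: its Killing tensor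
`Kill(X)(u,v) = (⟨∇ᵤX, v⟩ + ⟨∇ᵥX, u⟩)/2` vanishes identically (equivalently, its flow
consists of isometries). -/
def IsKillingField (n : ℕ) (k : ℝ)
    (X : EuclideanSpace ℝ (Fin (n + 1)) → EuclideanSpace ℝ (Fin (n + 1))) : Prop :=
  ∀ p ∈ Sph n k, ∀ u v : EuclideanSpace ℝ (Fin (n + 1)),
    ⟪u, p⟫ = 0 → ⟪v, p⟫ = 0 → ⟪covD n k X p u, v⟫ + ⟪covD n k X p v, u⟫ = 0

end

noncomputable section

/-- The rough Laplacian `div∇X` of a vector field `X` of `S^n(1/k)` at `p`: the trace of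
the second covariant derivative, computed as `Σᵢ ∇_{Ẽᵢ}(∇_{Ẽᵢ}X)(p)` where
`Ẽᵢ(q) = tproj q eᵢ` are the tangential projections of the standard basis fields (at a
point `p` of the sphere this sum equals the trace of `∇²X` over an orthonormal basis of
the tangent space, since `Σᵢ ∇_{Ẽᵢ}Ẽᵢ(p) = 0`). -/
def roughLapS (n : ℕ) (k : ℝ)
    (X : EuclideanSpace ℝ (Fin (n + 1)) → EuclideanSpace ℝ (Fin (n + 1)))
    (p : EuclideanSpace ℝ (Fin (n + 1))) : EuclideanSpace ℝ (Fin (n + 1)) :=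
  ∑ i : Fin (n + 1),
    tproj n k p
      (fderiv ℝ (fun q => covD n k X q (EuclideanSpace.single i 1)) p
        (tproj n k p (EuclideanSpace.single i 1)))

end

/-! Write `P_p u = u - k²⟪u, p⟫ p`, so the field is `X q = P_q v`. Its covariant derivative
along `e` has the shape `∇_e X (q) = -k²⟪v, q⟫ e + c(q) q`; differentiating at `p` along `P_p e`
and projecting again kills the normal term `c'(p) p`, and on the sphere `c(p) = k⁴⟪v, p⟫⟪e, p⟫`.
Since `P_p` is self-adjoint, the `i`-th summand of the rough Laplacian is therefore
`⟪k⁴⟪v, p⟫ p - k² P_p v, eᵢ⟫ P_p eᵢ`, and summing over the basis gives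
`P_p (k⁴⟪v, p⟫ p - k² P_p v) = -k² P_p v` because `P_p p = 0` and `P_p² = P_p`. -/

theorem EuclideanSpace.sum_inner_single_smul_apply {ι M : Type*} [Fintype ι] [DecidableEq ι]
    [AddCommMonoid M] [Module ℝ M] (f : EuclideanSpace ℝ ι →ₗ[ℝ] M) (w : EuclideanSpace ℝ ι) :
    ∑ i, ⟪w, EuclideanSpace.single i 1⟫ • f (EuclideanSpace.single i 1) = f w := by
  conv_rhs => rw [← (EuclideanSpace.basisFun ι ℝ).sum_repr' w]
  simp only [map_sum, map_smul, EuclideanSpace.basisFun_apply, real_inner_comm]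

section TangentProjection

variable {n : ℕ} {k : ℝ} {p : EuclideanSpace ℝ (Fin (n + 1))}

variable (n k p) in
noncomputable def tprojLinearMap :
    EuclideanSpace ℝ (Fin (n + 1)) →ₗ[ℝ] EuclideanSpace ℝ (Fin (n + 1)) where
  toFun := tproj n k p
  map_add' u w := by
    simp only [tproj, inner_add_left, mul_add, add_smul]
    abel
  map_smul' c u := by
    simp only [tproj, real_inner_smul_left, smul_sub, smul_smul, RingHom.id_apply]
    ring_nf

theorem tprojLinearMap_apply (u : EuclideanSpace ℝ (Fin (n + 1))) :
    tprojLinearMap n k p u = tproj n k p u :=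
  rfl

theorem inner_tproj_left (u w : EuclideanSpace ℝ (Fin (n + 1))) :
    ⟪tproj n k p u, w⟫ = ⟪u, tproj n k p w⟫ := by
  simp only [tproj, inner_sub_left, inner_sub_right, real_inner_smul_left,
    real_inner_smul_right, real_inner_comm p]
  ring

theorem tproj_self (hp : k ^ 2 * ⟪p, p⟫ = 1) : tproj n k p p = 0 := by
  rw [tproj, hp, one_smul, sub_self]

theorem tproj_tproj (hp : k ^ 2 * ⟪p, p⟫ = 1) (u : EuclideanSpace ℝ (Fin (n + 1))) :
    tproj n k p (tproj n k p u) = tproj n k p u := by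
  change tprojLinearMap n k p (u - (k ^ 2 * ⟪u, p⟫) • p) = _
  rw [map_sub, map_smul, tprojLinearMap_apply, tprojLinearMap_apply, tproj_self hp, smul_zero,
    sub_zero]

theorem sq_mul_inner_self_of_mem_Sph (hk : k ≠ 0) (hp : p ∈ Sph n k) :
    k ^ 2 * ⟪p, p⟫ = 1 := by
  rw [Sph, mem_sphere_zero_iff_norm] at hp
  rw [real_inner_self_eq_norm_sq, hp]
  field_simp

end TangentProjection

section Derivatives

variable {n : ℕ} {k : ℝ}

theorem fderiv_tproj_apply (v q u : EuclideanSpace ℝ (Fin (n + 1))) :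
    fderiv ℝ (fun q => tproj n k q v) q u = -(k ^ 2) • (⟪v, u⟫ • q + ⟪v, q⟫ • u) := by
  have h : HasFDerivAt (fun q => tproj n k q v) _ q := (hasFDerivAt_const v q).sub
    (((innerSL ℝ v).hasFDerivAt.const_mul (k ^ 2)).smul (hasFDerivAt_id q))
  rw [h.fderiv]
  simp only [coe_innerSL_apply, zero_sub, neg_add_rev, add_apply, neg_apply,
    ContinuousLinearMap.smulRight_apply, smul_apply, smul_eq_mul, ContinuousLinearMap.id_apply,
    smul_add, neg_smul]
  module

theorem tproj_fderiv_smul_add_smul_self {a c : EuclideanSpace ℝ (Fin (n + 1)) → ℝ}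
    {p : EuclideanSpace ℝ (Fin (n + 1))} (hp : k ^ 2 * ⟪p, p⟫ = 1)
    (ha : DifferentiableAt ℝ a p) (hc : DifferentiableAt ℝ c p)
    (e w : EuclideanSpace ℝ (Fin (n + 1))) :
    tproj n k p (fderiv ℝ (fun q => a q • e + c q • q) p w) =
      fderiv ℝ a p w • tproj n k p e + c p • tproj n k p w := by
  have h : HasFDerivAt (fun q => a q • e + c q • q) _ p :=
    (ha.hasFDerivAt.smul_const e).add (hc.hasFDerivAt.smul (hasFDerivAt_id p))
  rw [h.fderiv]
  have hpp : tprojLinearMap n k p p = 0 := tproj_self hp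
  simp only [← tprojLinearMap_apply]
  simp only [add_apply, ContinuousLinearMap.smulRight_apply, smul_apply,
    ContinuousLinearMap.id_apply, map_add, map_smul, hpp, smul_zero, add_zero]

theorem covD_tproj_field (v q e : EuclideanSpace ℝ (Fin (n + 1))) :
    covD n k (fun q => tproj n k q v) q e =
      (-(k ^ 2 * ⟪v, q⟫)) • e +
        ((-(k ^ 2 * ⟪v, e⟫) + 2 * k ^ 4 * ⟪v, q⟫ * ⟪e, q⟫) * (1 - k ^ 2 * ⟪q, q⟫) +
          k ^ 4 * ⟪v, q⟫ * ⟪e, q⟫) • q := by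
  rw [covD, fderiv_tproj_apply]
  simp only [tproj, inner_sub_left, inner_sub_right, inner_add_left, real_inner_smul_left,
    real_inner_smul_right]
  module

theorem tproj_fderiv_covD_tproj_field {v p : EuclideanSpace ℝ (Fin (n + 1))}
    (hp : k ^ 2 * ⟪p, p⟫ = 1) (e : EuclideanSpace ℝ (Fin (n + 1))) :
    tproj n k p (fderiv ℝ (fun q => covD n k (fun q => tproj n k q v) q e) p (tproj n k p e)) =
      ⟪(k ^ 4 * ⟪v, p⟫) • p - k ^ 2 • tproj n k p v, e⟫ • tproj n k p e := by
  have ha : HasFDerivAt (fun q => -(k ^ 2 * ⟪v, q⟫)) (-(k ^ 2 • innerSL ℝ v)) p :=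
    ((innerSL ℝ v).hasFDerivAt.const_mul (k ^ 2)).neg
  have hv : Differentiable ℝ (fun q => ⟪v, q⟫) := (innerSL ℝ v).differentiable
  have he : Differentiable ℝ (fun q => ⟪e, q⟫) := (innerSL ℝ e).differentiable
  have hs : Differentiable ℝ (fun q : EuclideanSpace ℝ (Fin (n + 1)) => ⟪q, q⟫) :=
    differentiable_id.inner ℝ differentiable_id
  simp only [covD_tproj_field]
  rw [tproj_fderiv_smul_add_smul_self hp ha.differentiableAt (by fun_prop), ha.fderiv,
    tproj_tproj hp, hp]
  simp only [neg_apply, smul_apply, innerSL_apply_apply,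
    inner_sub_left, real_inner_smul_left, inner_tproj_left, real_inner_comm p]
  module

end Derivatives

theorem projection_field_is_eigenfield_general
    (n : ℕ) (k : ℝ) (hk : 0 < k)
    (v : EuclideanSpace ℝ (Fin (n + 1))) :
    ∀ p ∈ Sph n k,
      -(roughLapS n k (fun q => v - (k ^ 2 * ⟪v, q⟫) • q) p) =
        k ^ 2 • (v - (k ^ 2 * ⟪v, p⟫) • p) := by
  intro p hp
  have hpp := sq_mul_inner_self_of_mem_Sph hk.ne' hp
  change -(roughLapS n k (fun q => tproj n k q v) p) = k ^ 2 • tproj n k p v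
  calc -(roughLapS n k (fun q => tproj n k q v) p)
      = -tproj n k p ((k ^ 4 * ⟪v, p⟫) • p - k ^ 2 • tproj n k p v) := by
        simp only [roughLapS, tproj_fderiv_covD_tproj_field hpp]
        exact congrArg Neg.neg
          (EuclideanSpace.sum_inner_single_smul_apply (tprojLinearMap n k p) _)
    _ = k ^ 2 • tproj n k p v := by
        rw [← tprojLinearMap_apply, map_sub, map_smul, map_smul, tprojLinearMap_apply,
          tprojLinearMap_apply, tproj_self hpp, tproj_tproj hpp]
        module

/-- For a nonzero vector `v ∈ ℝ^{n+1}`, the vector field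
`X(p) = v − k²⟨v,p⟩p` on `S^n(1/k)` — the pointwise orthogonal projection of `v` onto
the tangent spaces — satisfies `−div∇X = k²X`, i.e. it is an eigenvector field of the
rough Laplacian with eigenvalue `k²`. -/
theorem projection_field_is_eigenfield
    (n : ℕ) (hn : 2 ≤ n) (k : ℝ) (hk : 0 < k)
    (v : EuclideanSpace ℝ (Fin (n + 1))) (hv : v ≠ 0) :
    ∀ p ∈ Sph n k,
      -(roughLapS n k (fun q => v - (k ^ 2 * ⟪v, q⟫) • q) p) =
        k ^ 2 • (v - (k ^ 2 * ⟪v, p⟫) • p) :=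
  projection_field_is_eigenfield_general n k hk v
end

section
/- Let X be a smooth vector field on the sphere S^n(1/k), n ≥ 2, and let G be the isotropy subgroup of Iso(S^n(1/k)) fixing a point v ∈ S^n(1/k). If X has zero G-mean (X_G ≡ 0), then the function f(p) := ⟨X(p), v⟩ has zero mean on S^n(1/k), i.e. ∫_{S^n(1/k)} f(x) dx = 0. -/
open MeasureTheory Metric
open scoped RealInnerProductSpace

/- ### Auxiliary lemmas: finiteness of the Hausdorff measure of the sphere -/

noncomputable section AuxFiniteness

/-- Graph parametrization of a spherical cap. -/
def sphGraph (N : ℕ) (r : ℝ) (i : Fin (N + 1)) (s : ℝ) (y : Fin N → ℝ) :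
    EuclideanSpace ℝ (Fin (N + 1)) :=
  (WithLp.equiv 2 (Fin (N + 1) → ℝ)).symm
    (Fin.insertNth i (s * Real.sqrt (r ^ 2 - ∑ m, y m ^ 2)) y)

def sphDom (N : ℕ) (r : ℝ) : Set (Fin N → ℝ) :=
  {y | ∑ m, y m ^ 2 ≤ r ^ 2 - r ^ 2 / (N + 1)}

lemma sphDom_bound (N : ℕ) (r : ℝ) (hr : 0 < r) :
    ∀ z ∈ sphDom N r, ∀ m, |z m| ≤ r := by
  have hN1 : (0 : ℝ) < (N : ℝ) + 1 := by positivity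
  have hc2pos : 0 < r ^ 2 / ((N : ℝ) + 1) := by positivity
  intro z hz m
  have hzS : ∑ m, z m ^ 2 ≤ r ^ 2 - r ^ 2 / ((N : ℝ) + 1) := hz
  have h1 : z m ^ 2 ≤ r ^ 2 := le_trans (Finset.single_le_sum
    (f := fun m => z m ^ 2) (fun m _ => sq_nonneg _) (Finset.mem_univ m))
    (by linarith)
  calc |z m| = Real.sqrt (z m ^ 2) := (Real.sqrt_sq_eq_abs _).symm
  _ ≤ Real.sqrt (r ^ 2) := Real.sqrt_le_sqrt h1
  _ = r := Real.sqrt_sq hr.le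

lemma sphGraph_lipschitz (N : ℕ) (r : ℝ) (hr : 0 < r) (i : Fin (N + 1)) (s : ℝ)
    (hs : s = 1 ∨ s = -1) :
    LipschitzOnWith ((Real.sqrt ((N : ℝ) ^ 2 * (N + 1) + N)).toNNReal)
      (sphGraph N r i s) (sphDom N r) := by
  have hN1 : (0 : ℝ) < (N : ℝ) + 1 := by positivity
  have hc2pos : 0 < r ^ 2 / ((N : ℝ) + 1) := by positivity
  set c : ℝ := Real.sqrt (r ^ 2 / ((N : ℝ) + 1)) with hc
  have hcpos : 0 < c := Real.sqrt_pos.2 hc2pos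
  have hcsq : c ^ 2 = r ^ 2 / ((N : ℝ) + 1) := Real.sq_sqrt hc2pos.le
  rw [lipschitzOnWith_iff_dist_le_mul]
  intro y hy y' hy'
  have hyS : ∑ m, y m ^ 2 ≤ r ^ 2 - r ^ 2 / ((N : ℝ) + 1) := hy
  have hyS' : ∑ m, y' m ^ 2 ≤ r ^ 2 - r ^ 2 / ((N : ℝ) + 1) := hy'
  have hS0 : (0:ℝ) ≤ ∑ m, y m ^ 2 := Finset.sum_nonneg fun m _ => sq_nonneg _
  have hS0' : (0:ℝ) ≤ ∑ m, y' m ^ 2 := Finset.sum_nonneg fun m _ => sq_nonneg _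
  have hAbound := sphDom_bound N r hr
  set ay : ℝ := Real.sqrt (r ^ 2 - ∑ m, y m ^ 2) with hay
  set ay' : ℝ := Real.sqrt (r ^ 2 - ∑ m, y' m ^ 2) with hay'
  have haA : c ≤ ay := Real.sqrt_le_sqrt (by linarith)
  have haA' : c ≤ ay' := Real.sqrt_le_sqrt (by linarith)
  set d : ℝ := dist y y' with hd
  have hd0 : 0 ≤ d := dist_nonneg
  have hdm : ∀ m, |y m - y' m| ≤ d := by
    intro m
    simpa [Real.dist_eq] using dist_le_pi_dist y y' m
  have h1 : |(∑ m, y' m ^ 2) - ∑ m, y m ^ 2| ≤ 2 * N * r * d := by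
    have e : (∑ m, y' m ^ 2) - ∑ m, y m ^ 2 = ∑ m, (y' m ^ 2 - y m ^ 2) := by
      rw [← Finset.sum_sub_distrib]
    rw [e]
    refine le_trans (Finset.abs_sum_le_sum_abs _ _) ?_
    have hb : ∀ m ∈ Finset.univ, |y' m ^ 2 - y m ^ 2| ≤ 2 * r * d := by
      intro m _
      have e2 : y' m ^ 2 - y m ^ 2 = (y' m - y m) * (y' m + y m) := by ring
      rw [e2, abs_mul]
      have h2 : |y' m - y m| ≤ d := by rw [abs_sub_comm]; exact hdm m
      have h3 : |y' m + y m| ≤ 2 * r :=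
        le_trans (abs_add_le _ _) (by linarith [hAbound y' hy' m, hAbound y hy m])
      calc |y' m - y m| * |y' m + y m| ≤ d * (2 * r) :=
            mul_le_mul h2 h3 (abs_nonneg _) hd0
        _ = 2 * r * d := by ring
    calc (∑ m, |y' m ^ 2 - y m ^ 2|) ≤ ∑ _m : Fin N, 2 * r * d :=
          Finset.sum_le_sum hb
      _ = N * (2 * r * d) := by
          simp [Finset.sum_const, Finset.card_univ, nsmul_eq_mul]
      _ = 2 * N * r * d := by ring
  have h2 : |ay - ay'| ≤ (N : ℝ) * r * d / c := by
    have e1 : ay ^ 2 = r ^ 2 - ∑ m, y m ^ 2 := Real.sq_sqrt (by linarith)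
    have e2 : ay' ^ 2 = r ^ 2 - ∑ m, y' m ^ 2 := Real.sq_sqrt (by linarith)
    have hprod : |ay - ay'| * (ay + ay') = |(∑ m, y' m ^ 2) - ∑ m, y m ^ 2| := by
      have e : (ay - ay') * (ay + ay') = (∑ m, y' m ^ 2) - ∑ m, y m ^ 2 := by
        nlinarith [e1, e2]
      calc |ay - ay'| * (ay + ay') = |(ay - ay') * (ay + ay')| := by
            rw [abs_mul, abs_of_nonneg (by linarith : (0:ℝ) ≤ ay + ay')]
        _ = _ := by rw [e]
    rw [le_div_iff₀ hcpos]
    nlinarith [abs_nonneg (ay - ay'), hprod, h1, haA, haA', hcpos]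
  have habs : |s| = 1 := by rcases hs with h | h <;> simp [h]
  rw [EuclideanSpace.dist_eq, Fin.sum_univ_succAbove _ i]
  have hcoord_i : dist (sphGraph N r i s y i) (sphGraph N r i s y' i) = |ay - ay'| := by
    simp only [sphGraph, WithLp.equiv_symm_apply, PiLp.toLp_apply, Fin.insertNth_apply_same, Real.dist_eq]
    rw [← hay, ← hay', ← mul_sub, abs_mul, habs, one_mul]
  have hcoord : ∀ m : Fin N, dist (sphGraph N r i s y (i.succAbove m))
      (sphGraph N r i s y' (i.succAbove m)) = |y m - y' m| := by
    intro m
    simp [sphGraph, Real.dist_eq]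
  rw [hcoord_i]
  have hsum_le : |ay - ay'| ^ 2 + ∑ m, dist (sphGraph N r i s y (i.succAbove m))
      (sphGraph N r i s y' (i.succAbove m)) ^ 2
      ≤ ((N : ℝ) ^ 2 * (N + 1) + N) * d ^ 2 := by
    have hb1 : |ay - ay'| ^ 2 ≤ (N : ℝ) ^ 2 * (N + 1) * d ^ 2 := by
      have he : ((N : ℝ) * r * d / c) ^ 2 = (N : ℝ) ^ 2 * (N + 1) * d ^ 2 := by
        rw [div_pow, hcsq]
        field_simp
      calc |ay - ay'| ^ 2 ≤ ((N : ℝ) * r * d / c) ^ 2 := by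
            apply sq_le_sq' _ h2
            nlinarith [abs_nonneg (ay - ay'), h2]
        _ = _ := he
    have hb2 : (∑ m : Fin N, dist (sphGraph N r i s y (i.succAbove m))
        (sphGraph N r i s y' (i.succAbove m)) ^ 2) ≤ (N : ℝ) * d ^ 2 := by
      calc _ ≤ ∑ _m : Fin N, d ^ 2 := by
            refine Finset.sum_le_sum fun m _ => ?_
            rw [hcoord m]
            exact sq_le_sq' (by linarith [hdm m, abs_nonneg (y m - y' m)]) (hdm m)
        _ = (N : ℝ) * d ^ 2 := by
            simp [Finset.sum_const, Finset.card_univ, nsmul_eq_mul]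
    linarith
  calc Real.sqrt (|ay - ay'| ^ 2 + ∑ m, dist (sphGraph N r i s y (i.succAbove m))
        (sphGraph N r i s y' (i.succAbove m)) ^ 2)
      ≤ Real.sqrt (((N : ℝ) ^ 2 * (N + 1) + N) * d ^ 2) := Real.sqrt_le_sqrt hsum_le
    _ = Real.sqrt ((N : ℝ) ^ 2 * (N + 1) + N) * d := by
        rw [Real.sqrt_mul (by positivity), Real.sqrt_sq hd0]
    _ = ((Real.sqrt ((N : ℝ) ^ 2 * (N + 1) + N)).toNNReal : ℝ) * d := by
        rw [Real.coe_toNNReal _ (Real.sqrt_nonneg _)]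

lemma sph_subset_cover (N : ℕ) (r : ℝ) :
    sphere (0 : EuclideanSpace ℝ (Fin (N + 1))) r ⊆
      ⋃ i : Fin (N + 1),
        (sphGraph N r i 1 '' sphDom N r ∪ sphGraph N r i (-1) '' sphDom N r) := by
  intro x hx
  have hnorm : ‖x‖ = r := by simpa using mem_sphere_zero_iff_norm.1 hx
  have hsq : ∑ j, x j ^ 2 = r ^ 2 := by
    have h0 : (0:ℝ) ≤ ∑ j, x j ^ 2 := Finset.sum_nonneg fun j _ => sq_nonneg _
    have h := EuclideanSpace.norm_eq x
    rw [hnorm] at h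
    have h2 : r ^ 2 = Real.sqrt (∑ j, ‖x j‖ ^ 2) ^ 2 := by rw [← h]
    rw [Real.sq_sqrt (by positivity)] at h2
    simpa [Real.norm_eq_abs, sq_abs] using h2.symm
  obtain ⟨i, -, hi⟩ := Finset.exists_max_image Finset.univ (fun j => x j ^ 2)
    ⟨0, Finset.mem_univ 0⟩
  have hcard : (r:ℝ) ^ 2 ≤ ((N : ℝ) + 1) * x i ^ 2 := by
    have hle : ∑ j, x j ^ 2 ≤ (Finset.univ.card : ℕ) • (x i ^ 2) :=
      Finset.sum_le_card_nsmul _ _ _ fun j _ => hi j (Finset.mem_univ j)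
    rw [hsq] at hle
    simpa [Finset.card_univ, nsmul_eq_mul, add_comm] using hle
  set y : Fin N → ℝ := fun m => x (i.succAbove m) with hy
  have hsplit : x i ^ 2 + ∑ m, y m ^ 2 = r ^ 2 := by
    rw [← hsq, Fin.sum_univ_succAbove (fun j => x j ^ 2) i]
  have hN1 : (0:ℝ) < (N:ℝ) + 1 := by positivity
  have hymem : y ∈ sphDom N r := by
    have : r ^ 2 / ((N:ℝ) + 1) ≤ x i ^ 2 := by
      rw [div_le_iff₀ hN1]; nlinarith
    show ∑ m, y m ^ 2 ≤ r ^ 2 - r ^ 2 / ((N:ℕ) + 1 : ℝ)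
    push_cast
    linarith
  have hsqrt : Real.sqrt (r ^ 2 - ∑ m, y m ^ 2) = |x i| := by
    rw [show r ^ 2 - ∑ m, y m ^ 2 = x i ^ 2 by linarith, Real.sqrt_sq_eq_abs]
  set s : ℝ := if 0 ≤ x i then 1 else -1 with hs
  have hsx : s * Real.sqrt (r ^ 2 - ∑ m, y m ^ 2) = x i := by
    rw [hsqrt, hs]
    rcases le_or_gt 0 (x i) with h | h
    · simp [h, abs_of_nonneg h]
    · simp [not_le.2 h, abs_of_neg h]
  have hxeq : sphGraph N r i s y = x := by
    have h : Fin.insertNth i (s * Real.sqrt (r ^ 2 - ∑ m, y m ^ 2)) y = fun j => x j := by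
      rw [hsx]
      exact Fin.insertNth_self_removeNth i _
    simp only [sphGraph, h]
    rfl
  refine Set.mem_iUnion.2 ⟨i, ?_⟩
  rcases le_or_gt 0 (x i) with h | h
  · exact Or.inl ⟨y, hymem, by rwa [show (1:ℝ) = s by simp [hs, h]]⟩
  · exact Or.inr ⟨y, hymem, by rwa [show (-1:ℝ) = s by simp [hs, not_le.2 h]]⟩

lemma sph_hausdorff_lt_top (N : ℕ) (r : ℝ) (hr : 0 < r) :
    μH[(N:ℝ)] (sphere (0 : EuclideanSpace ℝ (Fin (N + 1))) r) < ⊤ := by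
  have hμdom : μH[(N:ℝ)] (sphDom N r) < ⊤ := by
    have hpi : (μH[(N:ℝ)] : Measure (Fin N → ℝ)) = volume := by
      simpa using hausdorffMeasure_pi_real (ι := Fin N)
    rw [hpi]
    refine lt_of_le_of_lt (measure_mono (?_ : sphDom N r ⊆ closedBall 0 r)) ?_
    · intro y hy
      rw [mem_closedBall_zero_iff, pi_norm_le_iff_of_nonneg hr.le]
      intro m
      simpa [Real.norm_eq_abs] using sphDom_bound N r hr y hy m
    · exact (isCompact_closedBall 0 r).measure_lt_top
  have himg : ∀ (i : Fin (N+1)) (s : ℝ), s = 1 ∨ s = -1 →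
      μH[(N:ℝ)] (sphGraph N r i s '' sphDom N r) < ⊤ := by
    intro i s hs
    refine lt_of_le_of_lt
      ((sphGraph_lipschitz N r hr i s hs).hausdorffMeasure_image_le (by positivity)) ?_
    exact ENNReal.mul_lt_top
      (ENNReal.rpow_lt_top_of_nonneg (by positivity) ENNReal.coe_ne_top) hμdom
  refine lt_of_le_of_lt (measure_mono (sph_subset_cover N r)) ?_
  refine lt_of_le_of_lt (measure_iUnion_fintype_le _ _) ?_
  refine ENNReal.sum_lt_top.2 fun i _ => ?_
  exact lt_of_le_of_lt (measure_union_le _ _)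
    (ENNReal.add_lt_top.2 ⟨himg i 1 (Or.inl rfl), himg i (-1) (Or.inr rfl)⟩)

end AuxFiniteness

/-- **Lemma `zero`.** Let `X` be a vector field of `S^n(1/k)` and let `G`
be the isotropy subgroup of `Iso(S^n(1/k))` fixing a point `v ∈ S^n(1/k)` (realized as a
compact topological group with Haar measure `μG`, acting via an injective homomorphism
`ρ` onto the group of linear isometries of `ℝ^{n+1}` fixing `v`; recall that every
isometry of the sphere is the restriction of a linear isometry of `ℝ^{n+1}`, whose
derivative is itself).  If `X` has zero `G`-mean, `X_G ≡ 0`, then the function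
`f(p) = ⟨X(p), v⟩` has zero mean on `S^n(1/k)`: `∫_{S^n(1/k)} f = 0`. -/
theorem zero_mean_function_of_zero_G_mean_field
    (n : ℕ) (hn : 2 ≤ n) (k : ℝ) (hk : 0 < k)
    (v : EuclideanSpace ℝ (Fin (n + 1))) (hv : v ∈ Sph n k)
    (G : Type) [Group G] [TopologicalSpace G] [IsTopologicalGroup G] [CompactSpace G]
    [MeasurableSpace G] [BorelSpace G]
    (μG : Measure G) [μG.IsHaarMeasure]
    (ρ : G →* (EuclideanSpace ℝ (Fin (n + 1)) ≃ₗᵢ[ℝ] EuclideanSpace ℝ (Fin (n + 1))))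
    (hρinj : Function.Injective ρ)
    (hρcont : Continuous fun q : G × EuclideanSpace ℝ (Fin (n + 1)) => ρ q.1 q.2)
    (hfix : ∀ g : G, ρ g v = v)
    (hfull : ∀ f : EuclideanSpace ℝ (Fin (n + 1)) ≃ₗᵢ[ℝ] EuclideanSpace ℝ (Fin (n + 1)),
      f v = v → ∃ g : G, ρ g = f)
    (X : EuclideanSpace ℝ (Fin (n + 1)) → EuclideanSpace ℝ (Fin (n + 1)))
    (hX : ContDiff ℝ (⊤ : ℕ∞) X) (htan : IsTangent n k X)
    (hXG : ∀ p ∈ Sph n k, ∫ g, (ρ g).symm (X (ρ g p)) ∂μG = 0) :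
    ∫ p, ⟪X p, v⟫ ∂smeasure n k = 0 := by
  classical
  have hr : (0:ℝ) < 1 / k := by positivity
  have hSm : MeasurableSet (Sph n k) := isClosed_sphere.measurableSet
  have hfin : smeasure n k Set.univ < ⊤ := by
    rw [smeasure, Measure.restrict_apply_univ]
    exact sph_hausdorff_lt_top n (1 / k) hr
  haveI : IsFiniteMeasure (smeasure n k) := ⟨hfin⟩
  have hXc : Continuous X := hX.continuous
  have hact : ∀ p : EuclideanSpace ℝ (Fin (n + 1)), Continuous fun g : G => ρ g p :=
    fun p => hρcont.comp (continuous_id.prodMk continuous_const)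
  have hsymm_inner : ∀ (g : G) (w : EuclideanSpace ℝ (Fin (n + 1))),
      ⟪(ρ g).symm w, v⟫ = ⟪w, v⟫ := by
    intro g w
    conv_lhs => rw [show v = (ρ g).symm (ρ g v) by rw [(ρ g).symm_apply_apply]]
    rw [(ρ g).symm.inner_map_map, hfix g]
  have hmem : ∀ (g : G) (p : EuclideanSpace ℝ (Fin (n + 1))), p ∈ Sph n k → ρ g p ∈ Sph n k := by
    intro g p hp
    have : ‖p‖ = 1 / k := by simpa [Sph] using mem_sphere_zero_iff_norm.1 hp
    simp only [Sph, mem_sphere_zero_iff_norm, (ρ g).norm_map]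
    exact this
  -- Step B: the G-average of p ↦ ⟪X p, v⟫ along the orbit of p vanishes.
  have hB : ∀ p ∈ Sph n k, ∫ g, ⟪X (ρ g p), v⟫ ∂μG = 0 := by
    intro p hp
    have hYc : Continuous fun g : G => (ρ g).symm (X (ρ g p)) := by
      have he : ∀ g : G, (ρ g).symm (X (ρ g p)) = ρ g⁻¹ (X (ρ g p)) := by
        intro g
        rw [map_inv, LinearIsometryEquiv.coe_inv]
      simp only [he]
      exact hρcont.comp (continuous_inv.prodMk (hXc.comp (hact p)))
    have hint : Integrable (fun g : G => (ρ g).symm (X (ρ g p))) μG :=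
      hYc.integrable_of_hasCompactSupport (HasCompactSupport.of_compactSpace _)
    have h0 := hXG p hp
    have hcomm := (innerSL ℝ v).integral_comp_comm hint
    rw [h0] at hcomm
    simp only [innerSL_apply_apply, inner_zero_right] at hcomm
    have : ∀ g : G, ⟪X (ρ g p), v⟫ = ⟪v, (ρ g).symm (X (ρ g p))⟫ := by
      intro g
      rw [← hsymm_inner g (X (ρ g p))]
      exact real_inner_comm _ _
    simp only [this]
    exact hcomm
  -- Step C: invariance of the integral under each isometry.
  have hC : ∀ g : G, (∫ p, ⟪X (ρ g p), v⟫ ∂smeasure n k) = ∫ p, ⟪X p, v⟫ ∂smeasure n k := by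
    intro g
    set e := (ρ g).toIsometryEquiv with he
    have hcoe : ∀ p, e p = ρ g p := fun p => rfl
    have hpre : (⇑e) ⁻¹' (Sph n k) = Sph n k := by
      ext x
      simp only [Set.mem_preimage, Sph, mem_sphere_zero_iff_norm, hcoe, (ρ g).norm_map]
    have hmp : MeasurePreserving e (smeasure n k) (smeasure n k) := by
      have h1 := (e.measurePreserving_hausdorffMeasure (n : ℝ)).restrict_preimage hSm
      rw [hpre] at h1
      exact h1
    have := hmp.integral_comp e.toHomeomorph.measurableEmbedding
      (fun p => ⟪X p, v⟫)
    simpa only [hcoe] using this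
  -- Boundedness of X on the sphere.
  obtain ⟨C, hCb⟩ : ∃ C : ℝ, ∀ p ∈ Sph n k, ‖X p‖ ≤ C :=
    (isCompact_sphere (0 : EuclideanSpace ℝ (Fin (n + 1))) (1 / k)).exists_bound_of_continuousOn
      hXc.continuousOn
  -- Step D: Fubini.
  have haemem : ∀ᵐ q ∂(μG.prod (smeasure n k)), q.2 ∈ Sph n k := by
    rw [ae_iff]
    have hset : {q : G × EuclideanSpace ℝ (Fin (n + 1)) | ¬ q.2 ∈ Sph n k}
        = Set.univ ×ˢ (Sph n k)ᶜ := by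
      ext q; simp
    rw [hset, Measure.prod_prod]
    have hz : smeasure n k (Sph n k)ᶜ = 0 := by
      rw [smeasure, Measure.restrict_apply hSm.compl, Set.compl_inter_self]
      simp
    simp [hz]
  have hFc : Continuous (Function.uncurry
      fun (g : G) (p : EuclideanSpace ℝ (Fin (n + 1))) => ⟪X (ρ g p), v⟫) := by
    apply Continuous.inner
    · exact hXc.comp hρcont
    · exact continuous_const
  have hFint : Integrable (Function.uncurry
      fun (g : G) (p : EuclideanSpace ℝ (Fin (n + 1))) => ⟪X (ρ g p), v⟫)
      (μG.prod (smeasure n k)) := by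
    refine Integrable.mono' (integrable_const (C * ‖v‖)) hFc.aestronglyMeasurable ?_
    filter_upwards [haemem] with q hq
    calc ‖⟪X (ρ q.1 q.2), v⟫‖ ≤ ‖X (ρ q.1 q.2)‖ * ‖v‖ := norm_inner_le_norm _ _
      _ ≤ C * ‖v‖ := by
          have := hCb _ (hmem q.1 q.2 hq)
          exact mul_le_mul_of_nonneg_right this (norm_nonneg v)
  have hswap := integral_integral_swap hFint
  have hRHS : (∫ p, (∫ g, ⟪X (ρ g p), v⟫ ∂μG) ∂smeasure n k) = 0 := by
    have hmem' : ∀ᵐ p ∂smeasure n k, p ∈ Sph n k := by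
      rw [smeasure]
      exact ae_restrict_mem hSm
    rw [show (0:ℝ) = ∫ _p, (0:ℝ) ∂smeasure n k by simp]
    refine integral_congr_ae ?_
    filter_upwards [hmem'] with p hp
    exact hB p hp
  have hLHS : (∫ g, (∫ p, ⟪X (ρ g p), v⟫ ∂smeasure n k) ∂μG)
      = (μG Set.univ).toReal • ∫ p, ⟪X p, v⟫ ∂smeasure n k := by
    calc _ = ∫ _g, (∫ p, ⟪X p, v⟫ ∂smeasure n k) ∂μG :=
          integral_congr_ae (Filter.Eventually.of_forall hC)
      _ = _ := integral_const _
  have hkey : (μG Set.univ).toReal • (∫ p, ⟪X p, v⟫ ∂smeasure n k) = 0 := by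
    rw [← hLHS]
    rw [show (∫ g, (∫ p, ⟪X (ρ g p), v⟫ ∂smeasure n k) ∂μG)
        = ∫ p, (∫ g, ⟪X (ρ g p), v⟫ ∂μG) ∂smeasure n k from hswap]
    exact hRHS
  have hpos : 0 < (μG Set.univ).toReal :=
    ENNReal.toReal_pos (isOpen_univ.measure_ne_zero μG ⟨1, trivial⟩) (measure_ne_top _ _)
  rcases smul_eq_zero.1 hkey with h | h
  · exact absurd h hpos.ne'
  · exact h
end

section
/- Let V be a smooth vector field on S^n(1/k) ⊂ ℝ^{n+1}, written as V = Σ_{l=1}^{n+1} a_l e_l where {e_l} is an orthonormal basis of ℝ^{n+1} and the a_l are smooth functions on S^n(1/k). Then at every point of S^n(1/k) one has ‖∇V‖² = −k² |V|² + Σ_{l=1}^{n+1} |grad a_l|², where ∇ is the Riemannian connection of S^n(1/k), grad is the intrinsic gradient on S^n(1/k), and |V| is the pointwise norm of V. -/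
open MeasureTheory Metric
open scoped RealInnerProductSpace

section MyAux
variable {E : Type*} [NormedAddCommGroup E] [InnerProductSpace ℝ E]

/-- A differentiable function vanishing on a sphere has derivative zero in
tangential directions. -/
lemma myaux_fderiv_zero_of_vanishing_on_sphere {f : E → ℝ} {p u : E} {r : ℝ}
    (hf : DifferentiableAt ℝ f p) (h0 : ∀ q : E, ‖q‖ = r → f q = 0)
    (hr : 0 < r) (hp : ‖p‖ = r) (hu : ⟪u, p⟫ = 0) :
    fderiv ℝ f p u = 0 := by
  rcases eq_or_ne u 0 with rfl | hu0
  · simp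
  have hun : (0:ℝ) < ‖u‖ := norm_pos_iff.mpr hu0
  set ω : ℝ := ‖u‖ / r with hω
  set c : ℝ → E := fun t => Real.cos (ω * t) • p + ((r / ‖u‖) * Real.sin (ω * t)) • u with hc
  have hc0 : c 0 = p := by simp [hc]
  have hnorm : ∀ t, ‖c t‖ = r := by
    intro t
    have hup : ⟪p, u⟫ = 0 := by rw [real_inner_comm]; exact hu
    have h1 : ‖c t‖ ^ 2 = r ^ 2 := by
      rw [← real_inner_self_eq_norm_sq]
      simp only [hc, real_inner_add_add_self, real_inner_smul_left, real_inner_smul_right,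
        hup, hu]
      rw [real_inner_self_eq_norm_sq p, real_inner_self_eq_norm_sq u, hp]
      have hsc := Real.sin_sq_add_cos_sq (ω * t)
      field_simp
      linear_combination (r*‖u‖) * hsc
    nlinarith [norm_nonneg (c t)]
  have hlin : HasDerivAt (fun t : ℝ => ω * t) ω 0 := by
    simpa using (hasDerivAt_id (0:ℝ)).const_mul ω
  have hcos : HasDerivAt (fun t : ℝ => Real.cos (ω * t)) 0 0 := by
    simpa using hlin.cos
  have hsin : HasDerivAt (fun t : ℝ => (r / ‖u‖) * Real.sin (ω * t)) 1 0 := by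
    have := (hlin.sin).const_mul (r / ‖u‖)
    have h2 : r * ‖u‖ ≠ 0 := by positivity
    have h3 : r / ‖u‖ * (‖u‖ / r) = 1 := by field_simp
    simpa [hω, h3, mul_comm, div_self h2] using this
  have hcd : HasDerivAt c u 0 := by
    have := (hcos.smul_const p).add (hsin.smul_const u)
    simpa [hc, Pi.add_def] using this
  have hcomp : HasDerivAt (f ∘ c) (fderiv ℝ f p u) 0 := by
    have hfp : HasFDerivAt f (fderiv ℝ f p) (c 0) := hc0 ▸ hf.hasFDerivAt
    exact hfp.comp_hasDerivAt 0 hcd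
  have hconst : f ∘ c = fun _ => 0 := funext fun t => h0 _ (hnorm t)
  have := hcomp.deriv
  rw [hconst] at this
  simpa using this.symm

end MyAux
section MyAux2

variable {n : ℕ} {k : ℝ} {p : EuclideanSpace ℝ (Fin (n + 1))}

lemma myaux_inner_tproj_left (u v : EuclideanSpace ℝ (Fin (n + 1))) :
    ⟪tproj n k p u, v⟫ = ⟪u, v⟫ - k ^ 2 * ⟪u, p⟫ * ⟪p, v⟫ := by
  rw [tproj, inner_sub_left, real_inner_smul_left]

lemma myaux_inner_tproj_right (u v : EuclideanSpace ℝ (Fin (n + 1))) :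
    ⟪u, tproj n k p v⟫ = ⟪u, v⟫ - k ^ 2 * ⟪v, p⟫ * ⟪u, p⟫ := by
  rw [tproj, inner_sub_right, real_inner_smul_right]

lemma myaux_tproj_selfadj (u v : EuclideanSpace ℝ (Fin (n + 1))) :
    ⟪tproj n k p u, v⟫ = ⟪u, tproj n k p v⟫ := by
  rw [myaux_inner_tproj_left, myaux_inner_tproj_right, real_inner_comm p v]; ring

lemma myaux_inner_p_tproj (h1 : k ^ 2 * ⟪p, p⟫ = 1)
    (v : EuclideanSpace ℝ (Fin (n + 1))) :
    ⟪p, tproj n k p v⟫ = 0 := by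
  rw [myaux_inner_tproj_right]
  linear_combination (-(⟪v, p⟫ : ℝ)) * h1 - real_inner_comm p v

lemma myaux_inner_tproj_tproj (h1 : k ^ 2 * ⟪p, p⟫ = 1)
    (u v : EuclideanSpace ℝ (Fin (n + 1))) :
    ⟪tproj n k p u, tproj n k p v⟫ = ⟪u, v⟫ - k ^ 2 * ⟪u, p⟫ * ⟪v, p⟫ := by
  rw [myaux_inner_tproj_left u (tproj n k p v), myaux_inner_p_tproj h1,
    myaux_inner_tproj_right]
  ring

lemma myaux_tproj_of_tangent {u : EuclideanSpace ℝ (Fin (n + 1))} (hu : ⟪u, p⟫ = 0) :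
    tproj n k p u = u := by
  simp [tproj, hu]

lemma myaux_tproj_sum (c : Fin (n + 1) → ℝ) (w : Fin (n + 1) → EuclideanSpace ℝ (Fin (n + 1))) :
    tproj n k p (∑ l, c l • w l) = ∑ l, c l • tproj n k p (w l) := by
  unfold tproj
  rw [sum_inner]
  simp only [real_inner_smul_left, smul_sub, smul_smul]
  rw [Finset.sum_sub_distrib, Finset.mul_sum, Finset.sum_smul]
  congr 1
  refine Finset.sum_congr rfl fun l _ => ?_
  module

end MyAux2

/-- Write a smooth vector field `V` of `S^n(1/k)` as
`V = Σ_l a_l e_l` where `{e_l}` is an orthonormal basis of `ℝ^{n+1}` and the `a_l` are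
smooth functions.  Then, pointwise on `S^n(1/k)`,
`‖∇V‖² = −k²|V|² + Σ_l |grad a_l|²`,
where `grad a_l` is the intrinsic gradient on the sphere (the tangential projection of
the ambient gradient). -/
theorem covariant_norm_sq_in_components
    (n : ℕ) (hn : 2 ≤ n) (k : ℝ) (hk : 0 < k)
    (V : EuclideanSpace ℝ (Fin (n + 1)) → EuclideanSpace ℝ (Fin (n + 1)))
    (hV : ContDiff ℝ (⊤ : ℕ∞) V) (htan : IsTangent n k V)
    (e : OrthonormalBasis (Fin (n + 1)) ℝ (EuclideanSpace ℝ (Fin (n + 1))))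
    (a : Fin (n + 1) → EuclideanSpace ℝ (Fin (n + 1)) → ℝ)
    (ha : ∀ l, ContDiff ℝ (⊤ : ℕ∞) (a l))
    (haV : ∀ p, V p = ∑ l, a l p • e l) :
    ∀ p ∈ Sph n k,
      covNormSq n k V p =
        -(k ^ 2) * ‖V p‖ ^ 2 + ∑ l, ‖tproj n k p (gradient (a l) p)‖ ^ 2 := by
  intro p hp
  classical
  have hk0 : k ≠ 0 := ne_of_gt hk
  have hpn : ‖p‖ = 1 / k := by
    simpa [Sph, mem_sphere_iff_norm] using hp
  have h1 : k ^ 2 * ⟪p, p⟫ = 1 := by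
    rw [real_inner_self_eq_norm_sq, hpn]
    field_simp
  have hal : ∀ l, DifferentiableAt ℝ (a l) p :=
    fun l => ((ha l).differentiable (by simp)).differentiableAt
  have hVdiff : DifferentiableAt ℝ V p := (hV.differentiable (by simp)).differentiableAt
  -- gradient characterisation
  have hgrad : ∀ l (w : EuclideanSpace ℝ (Fin (n + 1))),
      ⟪gradient (a l) p, w⟫ = fderiv ℝ (a l) p w := by
    intro l w
    rw [gradient]
    exact InnerProductSpace.toDual_symm_apply
  -- derivative of V in components
  have hDVat : HasFDerivAt V (∑ l, (fderiv ℝ (a l) p).smulRight (e l)) p := by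
    have hVf : V = fun q => ∑ l, a l q • e l := funext haV
    rw [hVf]
    exact HasFDerivAt.fun_sum fun l _ => ((hal l).hasFDerivAt.smul_const (e l))
  have hDV : ∀ w, fderiv ℝ V p w = ∑ l, (fderiv ℝ (a l) p w) • e l := by
    intro w
    rw [hDVat.fderiv]
    simp
  set g : Fin (n + 1) → EuclideanSpace ℝ (Fin (n + 1)) :=
    fun l => tproj n k p (gradient (a l) p) with hg
  set f : Fin (n + 1) → EuclideanSpace ℝ (Fin (n + 1)) :=
    fun l => tproj n k p (e l) with hf
  -- `covD` in components
  have hcov : ∀ u, covD n k V p u = ∑ l, ⟪g l, u⟫ • f l := by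
    intro u
    rw [covD, hDV (tproj n k p u), myaux_tproj_sum]
    refine Finset.sum_congr rfl fun l _ => ?_
    congr 1
    rw [hg]
    rw [myaux_tproj_selfadj, ← hgrad l (tproj n k p u)]
  -- the tangent field `W`
  set W : EuclideanSpace ℝ (Fin (n + 1)) := ∑ l, ⟪e l, p⟫ • g l with hW
  have htanp : ⟪V p, p⟫ = 0 := htan p hp
  have hWinner : ∀ w, ⟪W, w⟫ = ⟪-(V p), w⟫ := by
    intro w
    have hw0 : ⟪tproj n k p w, p⟫ = 0 := by
      rw [myaux_inner_tproj_left]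
      linear_combination (-(⟪w, p⟫ : ℝ)) * h1
    -- derivative of q ↦ ⟪V q, q⟫ along tangent directions vanishes
    set F : EuclideanSpace ℝ (Fin (n + 1)) → ℝ := fun q => ⟪V q, q⟫ with hF
    have hFd : DifferentiableAt ℝ F p := hVdiff.inner ℝ differentiableAt_id
    have hF0 : ∀ q : EuclideanSpace ℝ (Fin (n + 1)), ‖q‖ = 1 / k → F q = 0 := by
      intro q hq
      exact htan q (by simpa [Sph, mem_sphere_iff_norm] using hq)
    have hzero : fderiv ℝ F p (tproj n k p w) = 0 :=
      myaux_fderiv_zero_of_vanishing_on_sphere hFd hF0 (by positivity) hpn hw0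
    have hFat : HasFDerivAt F
        ((fderivInnerCLM ℝ (V p, p)).comp ((fderiv ℝ V p).prod (ContinuousLinearMap.id ℝ _))) p :=
      hVdiff.hasFDerivAt.inner ℝ (hasFDerivAt_id p)
    have hFder : ∀ u, fderiv ℝ F p u = ⟪V p, u⟫ + ⟪fderiv ℝ V p u, p⟫ := by
      intro u
      rw [hFat.fderiv]
      simp [fderivInnerCLM_apply]
    have hkey : ⟪fderiv ℝ V p (tproj n k p w), p⟫ = -⟪V p, w⟫ := by
      have h2 := hzero
      rw [hFder] at h2
      have h3 : ⟪V p, tproj n k p w⟫ = ⟪V p, w⟫ := by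
        rw [myaux_inner_tproj_right, htanp]
        ring
      linarith [h2, h3]
    calc ⟪W, w⟫ = ∑ l, ⟪e l, p⟫ * fderiv ℝ (a l) p (tproj n k p w) := by
          rw [hW, sum_inner]
          refine Finset.sum_congr rfl fun l _ => ?_
          rw [real_inner_smul_left, hg]
          congr 1
          rw [myaux_tproj_selfadj, ← hgrad l (tproj n k p w)]
      _ = ⟪fderiv ℝ V p (tproj n k p w), p⟫ := by
          rw [hDV, sum_inner]
          refine Finset.sum_congr rfl fun l _ => ?_
          rw [real_inner_smul_left]
          ring
      _ = ⟪-(V p), w⟫ := by rw [hkey, inner_neg_left]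
  have hWVp : W = -(V p) := ext_inner_right ℝ hWinner
  -- expand covNormSq
  have hexp : covNormSq n k V p = ∑ l, ∑ m, ⟪g l, g m⟫ * ⟪f l, f m⟫ := by
    rw [covNormSq]
    have step1 : ∀ i : Fin (n + 1),
        ‖covD n k V p (EuclideanSpace.single i 1)‖ ^ 2
          = ∑ l, ∑ m, (g l i * g m i) * ⟪f l, f m⟫ := by
      intro i
      rw [← real_inner_self_eq_norm_sq, hcov]
      rw [sum_inner]
      refine Finset.sum_congr rfl fun l _ => ?_
      rw [real_inner_smul_left, inner_sum]
      rw [Finset.mul_sum]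
      refine Finset.sum_congr rfl fun m _ => ?_
      rw [real_inner_smul_right]
      have hsingle : ∀ x : EuclideanSpace ℝ (Fin (n + 1)),
          ⟪x, EuclideanSpace.single i (1:ℝ)⟫ = x i := by
        intro x
        simp [EuclideanSpace.inner_single_right]
      rw [hsingle, hsingle]
      ring
    rw [Finset.sum_congr rfl fun i _ => step1 i]
    rw [Finset.sum_comm]
    refine Finset.sum_congr rfl fun l _ => ?_
    rw [Finset.sum_comm]
    refine Finset.sum_congr rfl fun m _ => ?_
    rw [← Finset.sum_mul]
    have hgg : ⟪g l, g m⟫ = ∑ i, g l i * g m i := by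
      simp [PiLp.inner_apply, RCLike.inner_apply, mul_comm]
    rw [hgg]
  -- compute ⟪f l, f m⟫
  have hff : ∀ l m, ⟪f l, f m⟫ = (if l = m then (1:ℝ) else 0) - k ^ 2 * ⟪e l, p⟫ * ⟪e m, p⟫ := by
    intro l m
    rw [hf, myaux_inner_tproj_tproj h1]
    congr 1
    have := e.orthonormal
    rw [orthonormal_iff_ite] at this
    simpa using this l m
  have hsplit : covNormSq n k V p = (∑ l, ‖g l‖ ^ 2) - k ^ 2 * ⟪W, W⟫ := by
    rw [hexp]
    have : ∀ l, ∑ m, ⟪g l, g m⟫ * ⟪f l, f m⟫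
        = ‖g l‖ ^ 2 - ∑ m, k ^ 2 * (⟪e l, p⟫ * ⟪e m, p⟫ * ⟪g l, g m⟫) := by
      intro l
      rw [Finset.sum_congr rfl fun m _ => by rw [hff l m]]
      have expand : ∀ m, ⟪g l, g m⟫ * ((if l = m then (1:ℝ) else 0) - k ^ 2 * ⟪e l, p⟫ * ⟪e m, p⟫)
          = (if l = m then ⟪g l, g m⟫ else 0) - k ^ 2 * (⟪e l, p⟫ * ⟪e m, p⟫ * ⟪g l, g m⟫) := by
        intro m
        by_cases h : l = m <;> simp [h] <;> ring
      rw [Finset.sum_congr rfl fun m _ => expand m]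
      rw [Finset.sum_sub_distrib, Finset.sum_ite_eq Finset.univ l fun m => ⟪g l, g m⟫]
      simp only [Finset.mem_univ, if_true]
      rw [real_inner_self_eq_norm_sq]
    rw [Finset.sum_congr rfl fun l _ => this l, Finset.sum_sub_distrib]
    congr 1
    rw [hW, sum_inner, Finset.mul_sum]
    refine Finset.sum_congr rfl fun l _ => ?_
    rw [real_inner_smul_left, inner_sum, Finset.mul_sum, Finset.mul_sum]
    refine Finset.sum_congr rfl fun m _ => ?_
    rw [real_inner_smul_right]
    ring
  rw [hsplit, hWVp]
  rw [inner_neg_neg, real_inner_self_eq_norm_sq]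
  ring
end

section
/- Let M be a compact orientable n-dimensional Riemannian manifold and G a compact Lie subgroup of Iso(M) acting on M with cohomogeneity one (the principal orbits of G have codimension 1). Assume that for every point p of a principal orbit, the isotropy subgroup of G at p acts (via the derivative) transitively on the spheres centered at the origin of the tangent space T_p G(p) of the orbit at p. Then every G-invariant smooth vector field X on M is orthogonal to the principal orbits of G: X(p) ∈ (T_p G(p))^⊥ for all p in a principal orbit. -/
open MeasureTheory
open scoped RealInnerProductSpace

/-- **Lemma `ortog`.**  Let `M` be a compact orientable `n`-dimensional
Riemannian manifold — realized, via an isometric (Nash) embedding, as a compact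
submanifold `M ⊆ ℝ^N` with tangent spaces `Tg p` — and let `G` be a compact Lie subgroup
of `Iso(M)` acting on `M` with cohomogeneity one: at a point `p` of a principal orbit
`G(p)`, the tangent space `Worb = T_p G(p)` of the orbit has codimension `1` in `T_pM`.
Assume that the isotropy subgroup of `G` at `p` acts, via the derivative, transitively on
the spheres centered at the origin of `T_p G(p)`.  Then every `G`-invariant smooth vector
field `X` of `M` is orthogonal to the principal orbits: `X(p) ∈ (T_p G(p))^⊥`. -/
theorem invariant_field_orthogonal_to_principal_orbits
    (N n : ℕ) (hn : 2 ≤ n)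
    (M : Set (EuclideanSpace ℝ (Fin N))) (hM : IsCompact M) (hMne : M.Nonempty)
    (Tg : EuclideanSpace ℝ (Fin N) → Submodule ℝ (EuclideanSpace ℝ (Fin N)))
    (hTg : ∀ p ∈ M, Module.finrank ℝ (Tg p) = n)
    (G : Type) [Group G] [TopologicalSpace G] [IsTopologicalGroup G] [CompactSpace G]
    [MeasurableSpace G] [BorelSpace G]
    (μG : Measure G) [μG.IsHaarMeasure]
    (act : G → EuclideanSpace ℝ (Fin N) → EuclideanSpace ℝ (Fin N))
    (dact : G → EuclideanSpace ℝ (Fin N) →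
      (EuclideanSpace ℝ (Fin N) →L[ℝ] EuclideanSpace ℝ (Fin N)))
    (hact_one : ∀ p ∈ M, act 1 p = p)
    (hact_mul : ∀ g h : G, ∀ p ∈ M, act (g * h) p = act g (act h p))
    (hact_mem : ∀ g : G, Set.MapsTo (act g) M M)
    (hact_cont : Continuous fun q : G × EuclideanSpace ℝ (Fin N) => act q.1 q.2)
    (hdact_deriv : ∀ g : G, ∀ p ∈ M, HasFDerivWithinAt (act g) (dact g p) M p)
    (hdact_isom : ∀ g : G, ∀ p ∈ M, ∀ v ∈ Tg p,
      dact g p v ∈ Tg (act g p) ∧ ‖dact g p v‖ = ‖v‖)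
    -- a point `p` of a principal orbit, with `Worb = T_p G(p)` the tangent space of
    -- the orbit at `p` :
    (p : EuclideanSpace ℝ (Fin N)) (hp : p ∈ M)
    (Worb : Submodule ℝ (EuclideanSpace ℝ (Fin N))) (hWorb : Worb ≤ Tg p)
    -- the tangent space of the orbit is spanned by the derivatives of the orbit maps,
    -- and is invariant under the isotropy group :
    (hWtan : ∀ u ∈ Worb, ∃ c : ℝ → EuclideanSpace ℝ (Fin N),
      (∀ t, c t ∈ Set.range fun g => act g p) ∧ c 0 = p ∧ HasDerivAt c u 0)
    -- cohomogeneity one: the principal orbit has codimension `1` :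
    (hcodim : Module.finrank ℝ Worb = n - 1)
    -- the isotropy subgroup at `p` acts transitively (via the derivative) on the
    -- spheres centered at the origin of `T_p G(p)` :
    (htrans : ∀ u ∈ Worb, ∀ w ∈ Worb, ‖u‖ = ‖w‖ →
      ∃ g : G, act g p = p ∧ dact g p u = w)
    -- a `G`-invariant smooth vector field `X` :
    (X : EuclideanSpace ℝ (Fin N) → EuclideanSpace ℝ (Fin N))
    (hXs : ContDiffOn ℝ (⊤ : ℕ∞) X M) (hXt : ∀ q ∈ M, X q ∈ Tg q)
    (hXinv : ∀ g : G, ∀ q ∈ M, X (act g q) = dact g q (X q)) :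
    ∀ u ∈ Worb, ⟪X p, u⟫ = 0 := by
  intro u hu
  have huT : u ∈ Tg p := hWorb hu
  have hXp : X p ∈ Tg p := hXt p hp
  obtain ⟨g, hg, hgu⟩ := htrans u hu (-u) (Worb.neg_mem hu) (norm_neg u).symm
  have hAX : dact g p (X p) = X p := by
    rw [← hXinv g p hp, hg]
  have key : ⟪dact g p (X p), dact g p u⟫ = ⟪X p, u⟫ := by
    have h1 : ‖dact g p (X p)‖ = ‖X p‖ := (hdact_isom g p hp _ hXp).2
    have h2 : ‖dact g p u‖ = ‖u‖ := (hdact_isom g p hp _ huT).2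
    have h3 : ‖dact g p (X p) + dact g p u‖ = ‖X p + u‖ := by
      rw [← map_add]
      exact (hdact_isom g p hp _ (Submodule.add_mem _ hXp huT)).2
    rw [real_inner_eq_norm_add_mul_self_sub_norm_mul_self_sub_norm_mul_self_div_two,
      real_inner_eq_norm_add_mul_self_sub_norm_mul_self_sub_norm_mul_self_div_two,
      h1, h2, h3]
  rw [hAX, hgu, inner_neg_right] at key
  linarith
end

section
/- Let M be a compact rank 1 symmetric space, G a compact Lie subgroup of Iso(M) that leaves pointwise fixed a totally geodesic submanifold T with dim T ≥ 1, p ∈ T, and v a nonzero vector in T_pT. Then g(p) = p and dg_p(v) = v for every g ∈ G; moreover, if V is any nonzero smooth vector field on M, q is a point with V(q) ≠ 0, and h ∈ Iso(M) satisfies h(p) = q and dh_p(v) = V(q), then the G-symmetrization (V^h)_G of the h-related field V^h is not identically zero. -/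
open MeasureTheory
open scoped RealInnerProductSpace

/-- An isometry of the (embedded) Riemannian manifold `M ⊆ ℝ^N` with tangent spaces
`Tg`: a bijection `h` of `M` whose differentials `dh x` (derivatives of `h` along `M`)
map each tangent space isometrically onto the tangent space at the image point. -/
def IsIsomPair {N : ℕ} (M : Set (EuclideanSpace ℝ (Fin N)))
    (Tg : EuclideanSpace ℝ (Fin N) → Submodule ℝ (EuclideanSpace ℝ (Fin N)))
    (h : EuclideanSpace ℝ (Fin N) → EuclideanSpace ℝ (Fin N))
    (dh : EuclideanSpace ℝ (Fin N) →
      (EuclideanSpace ℝ (Fin N) →L[ℝ] EuclideanSpace ℝ (Fin N))) : Prop :=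
  Set.BijOn h M M ∧
  (∀ x ∈ M, HasFDerivWithinAt h (dh x) M x) ∧
  (∀ x ∈ M, ∀ u ∈ Tg x, dh x u ∈ Tg (h x) ∧ ‖dh x u‖ = ‖u‖) ∧
  (∀ x ∈ M, ∀ w ∈ Tg (h x), ∃ u ∈ Tg x, dh x u = w)

/-- Let `M` be a compact rank `1` symmetric space — realized, via an
isometric embedding, as a compact submanifold `M ⊆ ℝ^N` with tangent spaces `Tg`,
Riemannian exponential `gexp`, and satisfying the two point homogeneous property
(`hTPH`).  Let `G` be a compact Lie subgroup of `Iso(M)` with Haar measure `μG` that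
leaves pointwise fixed a totally geodesic submanifold `T` of `M` with tangent space
`WT` at `p ∈ T` of dimension `≥ 1`, and let `v ∈ WT = T_pT` be nonzero.  Then
`g(p) = p` and `dg_p(v) = v` for every `g ∈ G`; moreover, if `V` is any nonzero smooth
vector field of `M`, `q` a point with `V(q) ≠ 0`, and `h ∈ Iso(M)` satisfies `h(p) = q`
and `dh_p(v) = V(q)`, then the `G`-symmetrization `(V^h)_G` of the `h`-related field
`V^h(x) = (dh_x)⁻¹ V(h x)` is not identically zero. -/
theorem fixed_geodesic_submanifold_symmetrization_nonzero
    (N n : ℕ) (hn : 2 ≤ n)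
    (M : Set (EuclideanSpace ℝ (Fin N))) (hM : IsCompact M) (hMne : M.Nonempty)
    (Tg : EuclideanSpace ℝ (Fin N) → Submodule ℝ (EuclideanSpace ℝ (Fin N)))
    (hTg : ∀ x ∈ M, Module.finrank ℝ (Tg x) = n)
    -- the Riemannian exponential map of `M` :
    (gexp : EuclideanSpace ℝ (Fin N) → EuclideanSpace ℝ (Fin N) →
      EuclideanSpace ℝ (Fin N))
    (hexp_mem : ∀ x ∈ M, ∀ u ∈ Tg x, gexp x u ∈ M)
    (hexp_zero : ∀ x ∈ M, gexp x 0 = x)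
    -- `M` has positive injectivity radius at `p` (below) and `exp` is natural under
    -- isometries; rank 1 symmetric: two point homogeneity `hTPH` :
    (hTPH : ∀ x ∈ M, ∀ y ∈ M, ∀ u ∈ Tg x, ∀ w ∈ Tg y, ‖u‖ = ‖w‖ →
      ∃ h dh, IsIsomPair M Tg h dh ∧ h x = y ∧ dh x u = w)
    -- the compact Lie subgroup `G` of `Iso(M)` :
    (G : Type) [Group G] [TopologicalSpace G] [IsTopologicalGroup G] [CompactSpace G]
    [MeasurableSpace G] [BorelSpace G]
    (μG : Measure G) [μG.IsHaarMeasure]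
    (act : G → EuclideanSpace ℝ (Fin N) → EuclideanSpace ℝ (Fin N))
    (dact : G → EuclideanSpace ℝ (Fin N) →
      (EuclideanSpace ℝ (Fin N) →L[ℝ] EuclideanSpace ℝ (Fin N)))
    (hact_one : ∀ x ∈ M, act 1 x = x)
    (hact_mul : ∀ g g' : G, ∀ x ∈ M, act (g * g') x = act g (act g' x))
    (hact_isom : ∀ g : G, IsIsomPair M Tg (act g) (dact g))
    (hact_cont : Continuous fun q : G × EuclideanSpace ℝ (Fin N) => act q.1 q.2)
    -- naturality of the exponential under the isometries of `G` :
    (hexp_nat : ∀ g : G, ∀ x ∈ M, ∀ u ∈ Tg x,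
      act g (gexp x u) = gexp (act g x) (dact g x u))
    -- the totally geodesic submanifold `T`, pointwise fixed by `G`, with tangent space
    -- `WT` at `p` of dimension `≥ 1` (being totally geodesic, the geodesics of `M`
    -- issuing from `p` tangent to `T` remain in `T`) :
    (T : Set (EuclideanSpace ℝ (Fin N))) (hTM : T ⊆ M)
    (hTfix : ∀ g : G, ∀ x ∈ T, act g x = x)
    (p : EuclideanSpace ℝ (Fin N)) (hpT : p ∈ T)
    (WT : Submodule ℝ (EuclideanSpace ℝ (Fin N))) (hWT : WT ≤ Tg p)
    (hWTdim : 1 ≤ Module.finrank ℝ WT)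
    (hgeo : ∀ w ∈ WT, gexp p w ∈ T)
    -- positive injectivity radius at `p` :
    (r : ℝ) (hr : 0 < r)
    (hinj : ∀ u ∈ Tg p, ∀ w ∈ Tg p, ‖u‖ < r → ‖w‖ < r → gexp p u = gexp p w → u = w)
    -- the nonzero vector `v ∈ T_pT` :
    (v : EuclideanSpace ℝ (Fin N)) (hv : v ∈ WT) (hv0 : v ≠ 0) :
    -- conclusion 1: `g(p) = p` and `dg_p(v) = v` for every `g ∈ G`
    (∀ g : G, act g p = p ∧ dact g p v = v) ∧
    -- conclusion 2: the symmetrization of the `h`-related field is not identically zero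
    (∀ V : EuclideanSpace ℝ (Fin N) → EuclideanSpace ℝ (Fin N),
      ContDiffOn ℝ (⊤ : ℕ∞) V M → (∀ x ∈ M, V x ∈ Tg x) →
      ∀ q ∈ M, V q ≠ 0 →
      ∀ (h : EuclideanSpace ℝ (Fin N) → EuclideanSpace ℝ (Fin N))
        (dh dhInv : EuclideanSpace ℝ (Fin N) →
          (EuclideanSpace ℝ (Fin N) →L[ℝ] EuclideanSpace ℝ (Fin N))),
        IsIsomPair M Tg h dh →
        (∀ x ∈ M, ∀ u ∈ Tg x, dhInv x (dh x u) = u) →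
        (∀ x ∈ M, ∀ w ∈ Tg (h x), dhInv x w ∈ Tg x ∧ dh x (dhInv x w) = w) →
        h p = q → dh p v = V q →
        ∃ x ∈ M,
          ∫ g, dact g⁻¹ (act g x) (dhInv (act g x) (V (h (act g x)))) ∂μG ≠ 0) := by
  have hpM : p ∈ M := hTM hpT
  have hvTg : v ∈ Tg p := hWT hv
  have hvn : (0:ℝ) < ‖v‖ := norm_pos_iff.mpr hv0
  have key : ∀ g : G, act g p = p ∧ dact g p v = v := by
    intro g
    have hfix : act g p = p := hTfix g p hpT
    refine ⟨hfix, ?_⟩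
    obtain ⟨hbij, hder, hisom, hsurj⟩ := hact_isom g
    set t : ℝ := r / (2 * ‖v‖) with ht
    have ht0 : 0 < t := div_pos hr (by positivity)
    have htv : ‖t • v‖ = r / 2 := by
      rw [norm_smul, Real.norm_eq_abs, abs_of_pos ht0, ht]
      field_simp
    have htvW : t • v ∈ WT := WT.smul_mem t hv
    have htvTg : t • v ∈ Tg p := hWT htvW
    have himg := hisom p hpM (t • v) htvTg
    rw [hfix] at himg
    have hTgeo : gexp p (t • v) ∈ T := hgeo _ htvW
    have hnat := hexp_nat g p hpM (t • v) htvTg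
    rw [hfix, hTfix g _ hTgeo] at hnat
    have heq : dact g p (t • v) = t • v :=
      hinj _ himg.1 _ htvTg (by rw [himg.2, htv]; linarith) (by rw [htv]; linarith)
        hnat.symm
    rw [(dact g p).map_smul] at heq
    exact smul_right_injective _ (ne_of_gt ht0) heq
  refine ⟨key, ?_⟩
  intro V hVsm hVtg q hqM hVq h dh dhInv hhiso hInvL hInvR hhp hdhv
  refine ⟨p, hpM, ?_⟩
  have hconst : (fun g : G => dact g⁻¹ (act g p) (dhInv (act g p) (V (h (act g p)))))
      = fun _ => v := by
    funext g
    rw [(key g).1, hhp, ← hdhv, hInvL p hpM v hvTg]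
    exact (key g⁻¹).2
  rw [hconst, integral_const]
  have hμ0 : μG Set.univ ≠ 0 := (isOpen_univ.measure_pos μG Set.univ_nonempty).ne'
  exact smul_ne_zero (ENNReal.toReal_ne_zero.mpr ⟨hμ0, measure_ne_top _ _⟩) hv0
end
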